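/- Define the single-sample ranking-wise IPS value f_IPS(x,A,ω) := (π(A|x)/π₀(A|x)) · ∑_{a∈𝒜} C(ω,a)·R(ω,a), with the convention t/0 := 0, and define the expected total reward q(x,A) := E_{ω∼κ(x,A)}[∑_{a∈𝒜} C(ω,a)·R(ω,a)]. Then the bias of IPS over one logged sample equals minus the value of the unsupported rankings: E_{x∼p, A∼π₀(x), ω∼κ(x,A)}[f_IPS(x,A,ω)] − V(π) = − E_{x∼p}[ ∑_{A ∈ 𝒰₀(x)} π(A|x)·q(x,A) ], where 𝒰₀(x) := {A ∈ ℛ : π₀(A|x) = 0} is the set of rankings unsupported by the logging policy at context x. -/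

import Mathlib

open scoped BigOperators Classical

/-- Expectation of a real-valued function under a PMF on a finite type. -/
noncomputable def pexp {X : Type*} [Fintype X] (p : PMF X) (f : X → ℝ) : ℝ :=
  ∑ x, (p x).toReal * f x

/-- Variance of a real-valued function under a PMF on a finite type. -/
noncomputable def pvar {X : Type*} [Fintype X] (p : PMF X) (f : X → ℝ) : ℝ :=
  pexp p (fun x => (f x - pexp p f) ^ 2)

/-- Joint distribution of one logged sample (x, A, ω) with x ∼ p, A ∼ π₀(x), ω ∼ κ(x,A). -/
noncomputable def logged {𝒳 ℛ Ω : Type*} (p : PMF 𝒳) (π₀ : 𝒳 → PMF ℛ)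
    (κ : 𝒳 → ℛ → PMF Ω) : PMF (𝒳 × ℛ × Ω) :=
  p.bind fun x => (π₀ x).bind fun A => (κ x A).map fun ω => (x, A, ω)

/-- Click probability of action a at context x given ranking A: p_c(x,a,A). -/
noncomputable def pcA {𝒳 ℛ Ω 𝒜 : Type*} [Fintype Ω]
    (κ : 𝒳 → ℛ → PMF Ω) (C : Ω → 𝒜 → ℝ) (x : 𝒳) (a : 𝒜) (A : ℛ) : ℝ :=
  pexp (κ x A) fun ω => C ω a

/-- Marginalized click probability of action a at context x under policy μ: p_c(x,a,μ). -/
noncomputable def pcPol {𝒳 ℛ Ω 𝒜 : Type*} [Fintype Ω] [Fintype ℛ]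
    (κ : 𝒳 → ℛ → PMF Ω) (C : Ω → 𝒜 → ℝ) (μ : 𝒳 → PMF ℛ) (x : 𝒳) (a : 𝒜) : ℝ :=
  pexp (μ x) fun A => pcA κ C x a A

/-- Policy value V(π). -/
noncomputable def polValue {𝒳 ℛ Ω 𝒜 : Type*} [Fintype 𝒳] [Fintype ℛ] [Fintype Ω] [Fintype 𝒜]
    (p : PMF 𝒳) (π : 𝒳 → PMF ℛ) (κ : 𝒳 → ℛ → PMF Ω) (C R : Ω → 𝒜 → ℝ) : ℝ :=
  pexp p fun x => pexp (π x) fun A => pexp (κ x A) fun ω => ∑ a, C ω a * R ω a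

/-!
On the support of the logging policy the importance weight π/π₀ turns the π₀-expectation
into the π-expectation exactly; on an unsupported ranking the weight is 0 (the `t / 0 = 0`
convention), so the π-weighted reward of those rankings is exactly what IPS misses.
-/

section pexp

variable {X Y : Type*} [Fintype X]

theorem pexp_const_mul (μ : PMF X) (c : ℝ) (f : X → ℝ) :
    pexp μ (fun x => c * f x) = c * pexp μ f := by
  simp only [pexp, Finset.mul_sum]
  exact Finset.sum_congr rfl fun x _ => mul_left_comm _ _ _

theorem pexp_sub (μ : PMF X) (f g : X → ℝ) :
    pexp μ (fun x => f x - g x) = pexp μ f - pexp μ g := by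
  simp only [pexp, mul_sub, Finset.sum_sub_distrib]

variable [Fintype Y]

theorem pexp_bind (μ : PMF X) (ν : X → PMF Y) (f : Y → ℝ) :
    pexp (μ.bind ν) f = pexp μ fun x => pexp (ν x) f := by
  simp only [pexp, PMF.bind_apply, tsum_fintype, Finset.mul_sum]
  rw [Finset.sum_comm]
  refine Finset.sum_congr rfl fun y _ => ?_
  rw [ENNReal.toReal_sum fun x _ => ENNReal.mul_ne_top (μ.apply_ne_top x) ((ν x).apply_ne_top y),
    Finset.sum_mul]
  exact Finset.sum_congr rfl fun x _ => by rw [ENNReal.toReal_mul, mul_assoc]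

theorem pexp_pure (y : Y) (f : Y → ℝ) : pexp (PMF.pure y) f = f y := by
  rw [pexp, Finset.sum_eq_single y] <;> simp +contextual [PMF.pure_apply, eq_comm]

theorem pexp_map (μ : PMF X) (e : X → Y) (f : Y → ℝ) :
    pexp (μ.map e) f = pexp μ fun x => f (e x) := by
  rw [PMF.map, pexp_bind]
  exact congrArg (pexp μ) (funext fun x => pexp_pure (e x) f)

end pexp

theorem pexp_logged {𝒳 ℛ Ω : Type*} [Fintype 𝒳] [Fintype ℛ] [Fintype Ω]
    (p : PMF 𝒳) (π₀ : 𝒳 → PMF ℛ) (κ : 𝒳 → ℛ → PMF Ω) (F : 𝒳 × ℛ × Ω → ℝ) :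
    pexp (logged p π₀ κ) F =
      pexp p fun x => pexp (π₀ x) fun A => pexp (κ x A) fun ω => F (x, A, ω) := by
  simp only [logged, pexp_bind, pexp_map]

theorem pexp_importance_weighted {X : Type*} [Fintype X] (μ μ₀ : PMF X) (g : X → ℝ) :
    pexp μ₀ (fun x => (μ x).toReal / (μ₀ x).toReal * g x) =
      pexp μ g - ∑ x ∈ Finset.univ.filter (fun x => μ₀ x = 0), (μ x).toReal * g x := by
  have on_support : ∀ x, (μ₀ x).toReal * ((μ x).toReal / (μ₀ x).toReal * g x) =
      if μ₀ x = 0 then 0 else (μ x).toReal * g x := by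
    intro x
    split_ifs with h
    · simp [h]
    · have : (μ₀ x).toReal ≠ 0 := ENNReal.toReal_ne_zero.mpr ⟨h, μ₀.apply_ne_top x⟩
      field_simp
  rw [pexp, Finset.sum_congr rfl fun x _ => on_support x, pexp,
    ← Finset.sum_filter_add_sum_filter_not Finset.univ (fun x => μ₀ x = 0)
      (fun x => (μ x).toReal * g x),
    Finset.sum_ite, Finset.sum_const_zero, zero_add]
  ring

theorem bias_of_IPS_general {𝒳 ℛ Ω 𝒜 : Type*}
    [Fintype 𝒳] [Fintype ℛ] [Fintype Ω] [Fintype 𝒜]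
    (p : PMF 𝒳) (π π₀ : 𝒳 → PMF ℛ) (κ : 𝒳 → ℛ → PMF Ω)
    (C R : Ω → 𝒜 → ℝ) :
    pexp (logged p π₀ κ)
        (fun s => ((π s.1 s.2.1).toReal / (π₀ s.1 s.2.1).toReal) *
          ∑ a, C s.2.2 a * R s.2.2 a)
      - polValue p π κ C R
    = - pexp p (fun x =>
        ∑ A ∈ Finset.univ.filter (fun A => π₀ x A = 0),
          (π x A).toReal * pexp (κ x A) (fun ω => ∑ a, C ω a * R ω a)) := by
  set q : 𝒳 → ℛ → ℝ := fun x A => pexp (κ x A) fun ω => ∑ a, C ω a * R ω a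
  have per_context : ∀ x, (pexp (π₀ x) fun A => pexp (κ x A) fun ω =>
      (π x A).toReal / (π₀ x A).toReal * ∑ a, C ω a * R ω a) =
      pexp (π x) (q x) -
        ∑ A ∈ Finset.univ.filter (fun A => π₀ x A = 0), (π x A).toReal * q x A := by
    intro x
    simp only [pexp_const_mul]
    exact pexp_importance_weighted (π x) (π₀ x) (q x)
  rw [pexp_logged, funext per_context, pexp_sub, polValue]
  ring

/-- Bias of ranking-wise IPS under violated common support equals minus the value of
the unsupported rankings. -/
theorem bias_of_IPS {𝒳 ℛ Ω 𝒜 : Type*}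
    [Fintype 𝒳] [Nonempty 𝒳] [Fintype ℛ] [Nonempty ℛ] [Fintype Ω] [Nonempty Ω] [Fintype 𝒜]
    (p : PMF 𝒳) (π π₀ : 𝒳 → PMF ℛ) (κ : 𝒳 → ℛ → PMF Ω)
    (C R : Ω → 𝒜 → ℝ) (hC : ∀ ω a, C ω a = 0 ∨ C ω a = 1) :
    pexp (logged p π₀ κ)
        (fun s => ((π s.1 s.2.1).toReal / (π₀ s.1 s.2.1).toReal) *
          ∑ a, C s.2.2 a * R s.2.2 a)
      - polValue p π κ C R
    = - pexp p (fun x =>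
        ∑ A ∈ Finset.univ.filter (fun A => π₀ x A = 0),
          (π x A).toReal * pexp (κ x A) (fun ω => ∑ a, C ω a * R ω a)) :=
  bias_of_IPS_general p π π₀ κ C R
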